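/- arXiv:1809.00067 — 8 statements merged into one kernel-verified Lean document; each statement's English description precedes it below -/
import Mathlib

section
/- For every element x of 𝔄 one has x²·x³ = -x·(x²·x²). -/
set_option maxHeartbeats 1000000

section aux

variable {F A : Type*} [Field F] [NonUnitalNonAssocRing A]
    [Module F A] [SMulCommClass F A A] [IsScalarTower F A A]

/-- degree-(3,1) part of the linearization of `x⁴` -/
def S1 (x y : A) : A :=
  y * (x * (x * x)) + x * (y * (x * x)) + x * (x * (y * x)) + x * (x * (x * y))

/-- degree-(2,2) part -/
def S2 (x y : A) : A :=
  x * (x * (y * y)) + x * (y * (x * y)) + x * (y * (y * x)) +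
  y * (x * (x * y)) + y * (x * (y * x)) + y * (y * (x * x))

/-- degree-(1,3) part -/
def S3 (x y : A) : A :=
  x * (y * (y * y)) + y * (x * (y * y)) + y * (y * (x * y)) + y * (y * (y * x))

lemma eq1 (hx4 : ∀ x : A, x * (x * (x * x)) = 0) (x y : A) :
    S1 x y + S2 x y + S3 x y = 0 := by
  have h := hx4 (x + y)
  simp only [add_mul, mul_add] at h
  rw [hx4 x, hx4 y] at h
  rw [← h]; unfold S1 S2 S3; abel

lemma eq2 (hx4 : ∀ x : A, x * (x * (x * x)) = 0) (x y : A) :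
    -S1 x y + S2 x y - S3 x y = 0 := by
  have h := hx4 (x + -y)
  simp only [add_mul, mul_add, neg_mul, mul_neg, neg_neg, neg_add] at h
  rw [hx4 x, hx4 y] at h
  rw [← h]; unfold S1 S2 S3; abel

lemma eq3 (hx4 : ∀ x : A, x * (x * (x * x)) = 0) (x y : A) :
    (2 : ℕ) • S1 x y + (4 : ℕ) • S2 x y + (8 : ℕ) • S3 x y = 0 := by
  have h := hx4 (x + (y + y))
  simp only [add_mul, mul_add] at h
  rw [hx4 x, hx4 y] at h
  rw [← h]; unfold S1 S2 S3; abel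

lemma halve (h2 : (2 : F) ≠ 0) {a : A} (h : a + a = 0) : a = 0 := by
  have h' : (2 : F) • a = 0 := by rw [two_smul]; exact h
  calc a = (2 : F)⁻¹ • ((2 : F) • a) := by rw [← mul_smul, inv_mul_cancel₀ h2, one_smul]
  _ = 0 := by rw [h', smul_zero]

lemma S1_eq_zero (h2 : (2 : F) ≠ 0) (h3 : (3 : F) ≠ 0)
    (hx4 : ∀ x : A, x * (x * (x * x)) = 0) (x y : A) : S1 x y = 0 := by
  have e1 := eq1 hx4 x y
  have e2 := eq2 hx4 x y
  have e3 := eq3 hx4 x y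
  -- S2 = 0
  have hS2 : S2 x y = 0 := by
    apply halve h2
    have := congrArg₂ (· + ·) e1 e2
    simp only [add_zero] at this
    rw [← this]; abel
  -- S1 + S3 = 0
  have h13 : S1 x y + S3 x y = 0 := by
    apply halve h2
    have := congrArg₂ (· - ·) e1 e2
    simp only [sub_zero] at this
    rw [← this]; abel
  -- S1 + 4 S3 = 0
  have h14 : S1 x y + (4 : ℕ) • S3 x y = 0 := by
    apply halve h2
    rw [← e3, hS2]; abel
  -- 3 S3 = 0
  have hS3 : S3 x y = 0 := by
    have h33 : (3 : F) • S3 x y = 0 := by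
      have : S1 x y + (4:ℕ) • S3 x y - (S1 x y + S3 x y) = 0 := by rw [h14, h13]; abel
      calc (3 : F) • S3 x y = S3 x y + S3 x y + S3 x y := by
            rw [show (3 : F) = 1 + 1 + 1 by norm_num, add_smul, add_smul, one_smul]
      _ = S1 x y + (4:ℕ) • S3 x y - (S1 x y + S3 x y) := by abel
      _ = 0 := this
    calc S3 x y = (3 : F)⁻¹ • ((3 : F) • S3 x y) := by
          rw [← mul_smul, inv_mul_cancel₀ h3, one_smul]
    _ = 0 := by rw [h33, smul_zero]
  rw [← h13, hS3, add_zero]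

end aux

/-- 𝔄 is a commutative (not necessarily associative) algebra over a field `F` of
characteristic ≠ 2, 3, satisfying the identity `x⁴ = 0` (principal powers:
`x¹ = x`, `x^(k+1) = x * x^k`). -/
theorem stmt_0 {F A : Type*} [Field F] [NonUnitalNonAssocRing A]
    [Module F A] [SMulCommClass F A A] [IsScalarTower F A A]
    (hcomm : ∀ a b : A, a * b = b * a)
    (h2 : (2 : F) ≠ 0) (h3 : (3 : F) ≠ 0)
    (hx4 : ∀ x : A, x * (x * (x * x)) = 0)
    (x : A) :
    (x * x) * (x * (x * x)) = -(x * ((x * x) * (x * x))) := by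
  have h := S1_eq_zero h2 h3 hx4 x (x * x)
  unfold S1 at h
  rw [hcomm (x * x) x] at h
  simp only [hx4 x, mul_zero, add_zero] at h
  exact eq_neg_of_add_eq_zero_left h
end

section
/- For all x, y ∈ 𝔄 one has x³·y = -x·(x²·y) - 2·x·(x·(x·y)); equivalently, the multiplication operator identity L_{x³} = -LU - 2L³ holds. -/
/-- 𝔄 is a commutative (not necessarily associative) algebra over a field `F` of
characteristic ≠ 2, 3, satisfying the identity `x⁴ = 0` (principal powers:
`x¹ = x`, `x^(k+1) = x * x^k`). -/
theorem stmt_2 {F A : Type*} [Field F] [NonUnitalNonAssocRing A]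
    [Module F A] [SMulCommClass F A A] [IsScalarTower F A A]
    (hcomm : ∀ a b : A, a * b = b * a)
    (h2 : (2 : F) ≠ 0) (h3 : (3 : F) ≠ 0)
    (hx4 : ∀ x : A, x * (x * (x * x)) = 0)
    (x y : A) :
    (x * (x * x)) * y = -(x * (x * x * (y))) + ((-2 : ℤ) • (x * (x * (x * (y))))) := by
  -- full expansion of (x+z)^4 = 0 into homogeneous components
  have expand : ∀ z : A,
      (z*(x*(x*x)) + x*(z*(x*x)) + x*(x*(z*x)) + x*(x*(x*z)))
      + (z*(z*(x*x)) + z*(x*(z*x)) + z*(x*(x*z)) + x*(z*(z*x)) + x*(z*(x*z)) + x*(x*(z*z)))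
      + (z*(z*(z*x)) + z*(z*(x*z)) + z*(x*(z*z)) + x*(z*(z*z))) = 0 := by
    intro z
    have h := hx4 (x + z)
    have e : (x+z)*((x+z)*((x+z)*(x+z))) =
        x*(x*(x*x)) + z*(z*(z*z)) +
        ((z*(x*(x*x)) + x*(z*(x*x)) + x*(x*(z*x)) + x*(x*(x*z)))
        + (z*(z*(x*x)) + z*(x*(z*x)) + z*(x*(x*z)) + x*(z*(z*x)) + x*(z*(x*z)) + x*(x*(z*z)))
        + (z*(z*(z*x)) + z*(z*(x*z)) + z*(x*(z*z)) + x*(z*(z*z)))) := by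
      simp only [mul_add, add_mul]; abel
    rw [e, hx4 x, hx4 z] at h
    simpa using h
  have hA := expand y
  -- substitution z = -y
  have hB : -(y*(x*(x*x)) + x*(y*(x*x)) + x*(x*(y*x)) + x*(x*(x*y)))
      + (y*(y*(x*x)) + y*(x*(y*x)) + y*(x*(x*y)) + x*(y*(y*x)) + x*(y*(x*y)) + x*(x*(y*y)))
      - (y*(y*(y*x)) + y*(y*(x*y)) + y*(x*(y*y)) + x*(y*(y*y))) = 0 := by
    have h := expand (-y)
    simp only [mul_neg, neg_mul, neg_neg] at h
    rw [← h]; abel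
  -- substitution z = y + y
  have hC : (2:ℤ) • (y*(x*(x*x)) + x*(y*(x*x)) + x*(x*(y*x)) + x*(x*(x*y)))
      + (4:ℤ) • (y*(y*(x*x)) + y*(x*(y*x)) + y*(x*(x*y)) + x*(y*(y*x)) + x*(y*(x*y)) + x*(x*(y*y)))
      + (8:ℤ) • (y*(y*(y*x)) + y*(y*(x*y)) + y*(x*(y*y)) + x*(y*(y*y))) = 0 := by
    have h := expand (y + y)
    simp only [mul_add, add_mul] at h
    rw [← h]; abel
  set P1 := y*(x*(x*x)) + x*(y*(x*x)) + x*(x*(y*x)) + x*(x*(x*y)) with hP1def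
  set P2 := y*(y*(x*x)) + y*(x*(y*x)) + y*(x*(x*y)) + x*(y*(y*x)) + x*(y*(x*y)) + x*(x*(y*y)) with hP2def
  set P3 := y*(y*(y*x)) + y*(y*(x*y)) + y*(x*(y*y)) + x*(y*(y*y)) with hP3def
  have hP2 : (2:ℤ) • P2 = 0 := by
    calc (2:ℤ) • P2 = (P1 + P2 + P3) + (-P1 + P2 - P3) := by abel
    _ = 0 := by rw [hA, hB, add_zero]
  have hP13 : (2:ℤ) • (P1 + P3) = 0 := by
    calc (2:ℤ) • (P1 + P3) = (P1 + P2 + P3) - (-P1 + P2 - P3) := by abel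
    _ = 0 := by rw [hA, hB, sub_zero]
  have h6 : (6:ℤ) • P1 = 0 := by
    calc (6:ℤ) • P1
        = (4:ℤ) • ((2:ℤ) • (P1 + P3)) + (2:ℤ) • ((2:ℤ) • P2)
          - ((2:ℤ) • P1 + (4:ℤ) • P2 + (8:ℤ) • P3) := by abel
    _ = 0 := by rw [hP13, hP2, hC, smul_zero, smul_zero, add_zero, sub_zero]
  have h6F : (6:F) • P1 = 0 := by
    have : ((6:ℤ):F) • P1 = (6:ℤ) • P1 := Int.cast_smul_eq_zsmul F 6 P1
    rw [show ((6:ℤ):F) = (6:F) by norm_num] at this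
    rw [this, h6]
  have h66 : (6:F) ≠ 0 := by
    rw [show (6:F) = 2*3 by norm_num]
    exact mul_ne_zero h2 h3
  have hP1 : P1 = 0 := by
    have := congrArg (fun a => (6:F)⁻¹ • a) h6F
    simpa [smul_smul, inv_mul_cancel₀ h66] using this
  rw [hP1def, hcomm y x, hcomm y (x*(x*x)), hcomm y (x*x)] at hP1
  have key : (x*(x*x))*y
      = ((x*(x*x))*y + x*(x*x*y) + x*(x*(x*y)) + x*(x*(x*y)))
        + (-(x*(x*x*y)) + (-2:ℤ) • (x*(x*(x*y)))) := by abel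
  rw [key, hP1, zero_add]
end

section
/- For all x, y ∈ 𝔄 one has (x²·x²)·y = -x²·(x²·y) - 2·x²·(x·(x·y)) - 2·x·(x²·(x·y)) + 4·x·(x·(x·(x·y))); equivalently, L_{x²x²} = -U² - 2UL² - 2LUL + 4L⁴. -/
set_option linter.unusedSectionVars false

section
variable {F A : Type*} [Field F] [NonUnitalNonAssocRing A]
    [Module F A] [SMulCommClass F A A] [IsScalarTower F A A]

/-- Cancellation of the scalar 6 in a module over a field of characteristic ≠ 2, 3. -/
lemma cancel6 (h2 : (2:F) ≠ 0) (h3 : (3:F) ≠ 0) {a : A} (h : (6:F) • a = 0) : a = 0 := by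
  have h6 : (6:F) ≠ 0 := by
    have h23 : (6:F) = 2 * 3 := by norm_num
    rw [h23]; exact mul_ne_zero h2 h3
  have := congrArg (fun b => (6:F)⁻¹ • b) h
  simpa [smul_smul, inv_mul_cancel₀ h6] using this

/-- First linearization of `x⁴ = 0`: the part of `(x+y)⁴ = 0` linear in `y`. -/
lemma linA (h2 : (2:F) ≠ 0) (h3 : (3:F) ≠ 0)
    (hx4 : ∀ x : A, x * (x * (x * x)) = 0) (x y : A) :
    y*(x*(x*x)) + x*(y*(x*x)) + x*(x*(y*x)) + x*(x*(x*y)) = 0 := by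
  have e1 := hx4 (x + y)
  have e2 := hx4 (x + (2:F)•y)
  have e3 := hx4 (x + (3:F)•y)
  simp only [mul_add, add_mul, smul_mul_assoc, mul_smul_comm, smul_smul, smul_add, hx4,
    smul_zero, add_zero, zero_add] at e1 e2 e3
  apply cancel6 h2 h3
  linear_combination (norm := module) (18:F) • e1 - (9:F) • e2 + (2:F) • e3

/-- Second linearization: the part of `linA (x+z) y` linear in `z`. -/
lemma linD (h2 : (2:F) ≠ 0) (h3 : (3:F) ≠ 0)
    (hx4 : ∀ x : A, x * (x * (x * x)) = 0) (x z y : A) :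
    (y*(z*(x*x)) + y*(x*(z*x)) + y*(x*(x*z)))
  + (z*(y*(x*x)) + x*(y*(z*x)) + x*(y*(x*z)))
  + (z*(x*(y*x)) + x*(z*(y*x)) + x*(x*(y*z)))
  + (z*(x*(x*y)) + x*(z*(x*y)) + x*(x*(z*y))) = 0 := by
  have f1 := linA h2 h3 hx4 (x + z) y
  have f2 := linA h2 h3 hx4 (x + (2:F)•z) y
  have f3 := linA h2 h3 hx4 (x + (3:F)•z) y
  have a0 := linA h2 h3 hx4 x y
  simp only [mul_add, add_mul, smul_mul_assoc, mul_smul_comm, smul_smul, smul_add] at f1 f2 f3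
  apply cancel6 h2 h3
  linear_combination (norm := module) (18:F) • f1 - (9:F) • f2 + (2:F) • f3 - (11:F) • a0

end

/-- 𝔄 is a commutative (not necessarily associative) algebra over a field `F` of
characteristic ≠ 2, 3, satisfying the identity `x⁴ = 0` (principal powers:
`x¹ = x`, `x^(k+1) = x * x^k`). -/
theorem stmt_3 {F A : Type*} [Field F] [NonUnitalNonAssocRing A]
    [Module F A] [SMulCommClass F A A] [IsScalarTower F A A]
    (hcomm : ∀ a b : A, a * b = b * a)
    (h2 : (2 : F) ≠ 0) (h3 : (3 : F) ≠ 0)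
    (hx4 : ∀ x : A, x * (x * (x * x)) = 0)
    (x y : A) :
    ((x * x) * (x * x)) * y =
      -(x * x * (x * x * (y))) + ((-2 : ℤ) • (x * x * (x * (x * (y))))) + ((-2 : ℤ) • (x * (x * x * (x * (y))))) + (4 : ℤ) • (x * (x * (x * (x * (y))))) := by
  have H1 := linD h2 h3 hx4 x (x*x) y
  have H2 := linA h2 h3 hx4 x y
  -- canonicalize H1 and H2: move y to the right, reassociate (x*x)*x, kill x⁴ terms
  simp only [hcomm y, hcomm (x*x) x, hx4, mul_zero, zero_mul, add_zero, zero_add] at H1 H2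
  -- multiply H2 on the left by x
  have H3 := congrArg (fun b => x * b) H2
  simp only [mul_add, mul_zero] at H3
  linear_combination (norm := module) H1 - (2:ℤ) • H3
end

section
/- For all x, y ∈ 𝔄 one has (x·(x²·x²))·y = -(LU² + 2LUL² + 2L²UL + 4L³U + 12L⁵)(y); equivalently, the operator identity L_{x(x²x²)} = -LU² - 2LUL² - 2L²UL - 4L³U - 12L⁵ holds. -/
lemma polar24 {A : Type*} [NonUnitalNonAssocRing A]
    (hx4 : ∀ x : A, x * (x * (x * x)) = 0) (a b c d : A) :
    a * (b * (c * d)) + a * (b * (d * c)) + a * (c * (b * d)) + a * (c * (d * b)) + a * (d * (b * c)) + a * (d * (c * b)) + b * (a * (c * d)) + b * (a * (d * c)) + b * (c * (a * d)) + b * (c * (d * a)) + b * (d * (a * c)) + b * (d * (c * a)) + c * (a * (b * d)) + c * (a * (d * b)) + c * (b * (a * d)) + c * (b * (d * a)) + c * (d * (a * b)) + c * (d * (b * a)) + d * (a * (b * c)) + d * (a * (c * b)) + d * (b * (a * c)) + d * (b * (c * a)) + d * (c * (a * b)) + d * (c * (b * a)) = 0 := by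
  have key : a * (b * (c * d)) + a * (b * (d * c)) + a * (c * (b * d)) + a * (c * (d * b)) + a * (d * (b * c)) + a * (d * (c * b)) + b * (a * (c * d)) + b * (a * (d * c)) + b * (c * (a * d)) + b * (c * (d * a)) + b * (d * (a * c)) + b * (d * (c * a)) + c * (a * (b * d)) + c * (a * (d * b)) + c * (b * (a * d)) + c * (b * (d * a)) + c * (d * (a * b)) + c * (d * (b * a)) + d * (a * (b * c)) + d * (a * (c * b)) + d * (b * (a * c)) + d * (b * (c * a)) + d * (c * (a * b)) + d * (c * (b * a)) =
      (a + b + c + d) * ((a + b + c + d) * ((a + b + c + d) * (a + b + c + d))) - ((a + b + c) * ((a + b + c) * ((a + b + c) * (a + b + c)))) - ((a + b + d) * ((a + b + d) * ((a + b + d) * (a + b + d)))) - ((a + c + d) * ((a + c + d) * ((a + c + d) * (a + c + d)))) - ((b + c + d) * ((b + c + d) * ((b + c + d) * (b + c + d)))) + ((a + b) * ((a + b) * ((a + b) * (a + b)))) + ((a + c) * ((a + c) * ((a + c) * (a + c)))) + ((a + d) * ((a + d) * ((a + d) * (a + d)))) + ((b + c) * ((b + c) * ((b + c) * (b + c))))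 + ((b + d) * ((b + d) * ((b + d) * (b + d)))) + ((c + d) * ((c + d) * ((c + d) * (c + d)))) - ((a) * ((a) * ((a) * (a)))) - ((b) * ((b) * ((b) * (b)))) - ((c) * ((c) * ((c) * (c)))) - ((d) * ((d) * ((d) * (d)))) := by
    simp only [mul_add, add_mul]
    abel
  rw [key]
  simp only [hx4]
  abel

/-- 𝔄 is a commutative (not necessarily associative) algebra over a field `F` of
characteristic ≠ 2, 3, satisfying the identity `x⁴ = 0` (principal powers:
`x¹ = x`, `x^(k+1) = x * x^k`). -/
theorem stmt_4 {F A : Type*} [Field F] [NonUnitalNonAssocRing A]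
    [Module F A] [SMulCommClass F A A] [IsScalarTower F A A]
    (hcomm : ∀ a b : A, a * b = b * a)
    (h2 : (2 : F) ≠ 0) (h3 : (3 : F) ≠ 0)
    (hx4 : ∀ x : A, x * (x * (x * x)) = 0)
    (x y : A) :
    (x * ((x * x) * (x * x))) * y =
      -(x * (x * x * (x * x * (y)))) + ((-2 : ℤ) • (x * (x * x * (x * (x * (y)))))) + ((-2 : ℤ) • (x * (x * (x * x * (x * (y)))))) + ((-4 : ℤ) • (x * (x * (x * (x * x * (y)))))) + ((-12 : ℤ) • (x * (x * (x * (x * (x * (y))))))) := by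
  have comb : (6 : ℤ) • ((x * ((x * x) * (x * x))) * y - (-(x * (x * x * (x * x * (y)))) + ((-2 : ℤ) • (x * (x * x * (x * (x * (y)))))) + ((-2 : ℤ) • (x * (x * (x * x * (x * (y)))))) + ((-4 : ℤ) • (x * (x * (x * (x * x * (y)))))) + ((-12 : ℤ) • (x * (x * (x * (x * (x * (y))))))))) =
      (-3 : ℤ) • (x * (x * ((x * (x * x)) * y)) + x * (x * (y * (x * (x * x)))) + x * ((x * (x * x)) * (x * y)) + x * ((x * (x * x)) * (y * x)) + x * (y * (x * (x * (x * x)))) + x * (y * ((x * (x * x)) * x)) + x * (x * ((x * (x * x)) * y)) + x * (x * (y * (x * (x * x)))) + x * ((x * (x * x)) * (x * y)) + x * ((x * (x * x)) * (y * x)) + x * (y * (x * (x * (x * x)))) + x * (y * ((x * (x * x)) * x)) + (x * (x * x)) * (x * (x * y)) + (x * (x * x)) * (x * (y * x)) + (x * (x * x)) * (x * (x * y)) + (x * (x * x)) * (x * (y * x)) + (x * (x * x)) * (y * (x * x)) + (x * (x * x)) * (y * (x * x)) + y * (x * (x * (x * (x * x)))) + y * (x * ((x * (x * x)) * x)) +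 y * (x * (x * (x * (x * x)))) + y * (x * ((x * (x * x)) * x)) + y * ((x * (x * x)) * (x * x)) + y * ((x * (x * x)) * (x * x))) + (2 : ℤ) • (x * (x * (x * (x * (x * y)) + x * (x * (y * x)) + x * (x * (x * y)) + x * (x * (y * x)) + x * (y * (x * x)) + x * (y * (x * x)) + x * (x * (x * y)) + x * (x * (y * x)) + x * (x * (x * y)) + x * (x * (y * x)) + x * (y * (x * x)) + x * (y * (x * x)) + x * (x * (x * y)) + x * (x * (y * x)) + x * (x * (x * y)) + x * (x * (y * x)) + x * (y * (x * x)) + x * (y * (x * x)) + y * (x * (x * x)) + y * (x * (x * x)) + y * (x * (x * x)) + y * (x * (x * x)) + y * (x * (x * x)) + y * (x * (x * x))))) + (x * (x * (x * ((x * x) * y))) + x * (x * (((x * x) * y) * x)) + x * (x * (x * ((x * x) * y))) + x * (x * (((x * x) * y) * x)) + x * (((x * x) * y) * (x * x)) + x * (((x * x) * y) * (x * x)) + x * (x * (x * ((x * x) * y))) + x * (x * (((x * x) * y) * x)) + x * (x * (x * ((x * x) * y))) + x * (x * (((x * x) * y) * x)) + x * (((x * x) * y) * (x * x)) + x * (((x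 * x) * y) * (x * x)) + x * (x * (x * ((x * x) * y))) + x * (x * (((x * x) * y) * x)) + x * (x * (x * ((x * x) * y))) + x * (x * (((x * x) * y) * x)) + x * (((x * x) * y) * (x * x)) + x * (((x * x) * y) * (x * x)) + ((x * x) * y) * (x * (x * x)) + ((x * x) * y) * (x * (x * x)) + ((x * x) * y) * (x * (x * x)) + ((x * x) * y) * (x * (x * x)) + ((x * x) * y) * (x * (x * x)) + ((x * x) * y) * (x * (x * x))) + (2 : ℤ) • (x * (x * (x * (x * (x * y)))) + x * (x * ((x * (x * y)) * x)) + x * (x * (x * (x * (x * y)))) + x * (x * ((x * (x * y)) * x)) + x * ((x * (x * y)) * (x * x)) + x * ((x * (x * y)) * (x * x)) + x * (x * (x * (x * (x * y)))) + x * (x * ((x * (x * y)) * x)) + x * (x * (x * (x * (x * y)))) + x * (x * ((x * (x * y)) * x)) + x * ((x * (x * y)) * (x * x)) + x * ((x * (x * y)) * (x * x)) + x * (x * (x * (x * (x * y)))) + x * (x * ((x * (x * y)) * x)) + x * (x * (x * (x * (x * y)))) + x * (x * ((x * (x * y)) * x)) + x * ((x * (x * y)) * (x * x)) + x * ((x *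 (x * y)) * (x * x)) + (x * (x * y)) * (x * (x * x)) + (x * (x * y)) * (x * (x * x)) + (x * (x * y)) * (x * (x * x)) + (x * (x * y)) * (x * (x * x)) + (x * (x * y)) * (x * (x * x)) + (x * (x * y)) * (x * (x * x))) + (2 : ℤ) • (x * (x * (x * (x * (x * y))) + x * (x * ((x * y) * x)) + x * (x * (x * (x * y))) + x * (x * ((x * y) * x)) + x * ((x * y) * (x * x)) + x * ((x * y) * (x * x)) + x * (x * (x * (x * y))) + x * (x * ((x * y) * x)) + x * (x * (x * (x * y))) + x * (x * ((x * y) * x)) + x * ((x * y) * (x * x)) + x * ((x * y) * (x * x)) + x * (x * (x * (x * y))) + x * (x * ((x * y) * x)) + x * (x * (x * (x * y))) + x * (x * ((x * y) * x)) + x * ((x * y) * (x * x)) + x * ((x * y) * (x * x)) + (x * y) * (x * (x * x)) + (x * y) * (x * (x * x)) + (x * y) * (x * (x * x)) + (x * y) * (x * (x * x)) + (x * y) * (x * (x * x)) + (x * y) * (x * (x * x)))) + y * (x * (x * (x * (x * x))) + x * (x * ((x * x) * x)) + x * (x * (x * (x * x))) + x * (x * ((x * x) * x)) + x * ((x * x)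 * (x * x)) + x * ((x * x) * (x * x)) + x * (x * (x * (x * x))) + x * (x * ((x * x) * x)) + x * (x * (x * (x * x))) + x * (x * ((x * x) * x)) + x * ((x * x) * (x * x)) + x * ((x * x) * (x * x)) + x * (x * (x * (x * x))) + x * (x * ((x * x) * x)) + x * (x * (x * (x * x))) + x * (x * ((x * x) * x)) + x * ((x * x) * (x * x)) + x * ((x * x) * (x * x)) + (x * x) * (x * (x * x)) + (x * x) * (x * (x * x)) + (x * x) * (x * (x * x)) + (x * x) * (x * (x * x)) + (x * x) * (x * (x * x)) + (x * x) * (x * (x * x))) + (12 : ℤ) • (x * (y * (x * (x * (x * x))))) := by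
    simp only [mul_add, add_mul]
    simp only [hcomm]
    abel
  have zero6 : (6 : ℤ) • ((x * ((x * x) * (x * x))) * y - (-(x * (x * x * (x * x * (y)))) + ((-2 : ℤ) • (x * (x * x * (x * (x * (y)))))) + ((-2 : ℤ) • (x * (x * (x * x * (x * (y)))))) + ((-4 : ℤ) • (x * (x * (x * (x * x * (y)))))) + ((-12 : ℤ) • (x * (x * (x * (x * (x * (y))))))))) = 0 := by
    rw [comb, polar24 hx4 x x (x * (x * x)) y, polar24 hx4 x x x y,
      polar24 hx4 x x x ((x * x) * y), polar24 hx4 x x x (x * (x * y)),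
      polar24 hx4 x x x (x * y), polar24 hx4 x x x (x * x), hx4 x]
    simp
  have h6F : ((6 : ℤ) : F) • ((x * ((x * x) * (x * x))) * y - (-(x * (x * x * (x * x * (y)))) + ((-2 : ℤ) • (x * (x * x * (x * (x * (y)))))) + ((-2 : ℤ) • (x * (x * (x * x * (x * (y)))))) + ((-4 : ℤ) • (x * (x * (x * (x * x * (y)))))) + ((-12 : ℤ) • (x * (x * (x * (x * (x * (y))))))))) = 0 := by
    rw [Int.cast_smul_eq_zsmul]; exact zero6
  have h6ne : ((6 : ℤ) : F) ≠ 0 := by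
    have : ((6 : ℤ) : F) = 2 * 3 := by norm_num
    rw [this]; exact mul_ne_zero h2 h3
  have hv := (smul_eq_zero.mp h6F).resolve_left h6ne
  exact sub_eq_zero.mp hv
end

section
/- For every x ∈ 𝔄 one has (x²·x²)·y = -4·x·(x²·(x·y)) for all y ∈ 𝔄; equivalently, the operator identity L_{x²x²} = -4LUL holds. -/
/-! Linearize `x (x² x²) = 0` at `x` in the direction `y`: the part of `(x + t y)((x + t y)² (x + t y)²)`
linear in `t` is `y (x² x²) + 4 x (x² (x y))`. The finite difference
`8 (f 1 - f (-1)) - (f 2 - f (-2))` equals `12` times that part minus `48 y (y² y²)`;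
everything except the linear part vanishes by hypothesis, and `12` is invertible. -/

section
variable {A : Type*} [NonUnitalNonAssocRing A]

def mulSqSq (z : A) : A := z * (z * z * (z * z))

theorem mulSqSq_linearization (hcomm : ∀ a b : A, a * b = b * a) (x y : A) :
    8 • (mulSqSq (x + y) - mulSqSq (x - y)) - (mulSqSq (x + 2 • y) - mulSqSq (x - 2 • y)) =
      12 • (y * (x * x * (x * x)) + 4 • (x * (x * x * (x * y)))) - 48 • mulSqSq y := by
  simp only [mulSqSq, mul_add, add_mul, mul_sub, mul_smul_comm, smul_smul, hcomm]
  module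

end

theorem stmt_14_general {F A : Type*} [Field F] [NonUnitalNonAssocRing A]
    [Module F A]
    (hcomm : ∀ a b : A, a * b = b * a)
    (h2 : (2 : F) ≠ 0) (h3 : (3 : F) ≠ 0)
    (hx5 : ∀ x : A, x * ((x * x) * (x * x)) = 0)
    (x y : A) :
    ((x * x) * (x * x)) * y = ((-4 : ℤ) • (x * (x * x * (x * (y))))) := by
  have h12 : (12 : F) ≠ 0 := by
    rw [show (12 : F) = 2 * 2 * 3 by norm_num]
    exact mul_ne_zero (mul_ne_zero h2 h2) h3
  have hlin : 12 • (y * (x * x * (x * x)) + 4 • (x * (x * x * (x * y)))) = 0 := by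
    simpa only [mulSqSq, hx5, sub_self, smul_zero, sub_zero] using
      (mulSqSq_linearization hcomm x y).symm
  rw [← Nat.cast_smul_eq_nsmul F, Nat.cast_ofNat] at hlin
  have hsum := (smul_eq_zero.mp hlin).resolve_left h12
  rw [hcomm, neg_smul, eq_neg_iff_add_eq_zero]
  exact_mod_cast hsum

/-- 𝔄 is a commutative (not necessarily associative) algebra over a field `F` of
characteristic ≠ 2, 3, satisfying the identities `x⁴ = 0` and `x(x²x²) = 0`. -/
theorem stmt_14 {F A : Type*} [Field F] [NonUnitalNonAssocRing A]
    [Module F A] [SMulCommClass F A A] [IsScalarTower F A A]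
    (hcomm : ∀ a b : A, a * b = b * a)
    (h2 : (2 : F) ≠ 0) (h3 : (3 : F) ≠ 0)
    (hx4 : ∀ x : A, x * (x * (x * x)) = 0)
    (hx5 : ∀ x : A, x * ((x * x) * (x * x)) = 0)
    (x y : A) :
    ((x * x) * (x * x)) * y = ((-4 : ℤ) • (x * (x * x * (x * (y))))) :=
  stmt_14_general hcomm h2 h3 hx5 x y
end

section
/- For every x ∈ 𝔄 the multiplication operator identity U² = -2UL² + 2LUL + 4L⁴ holds; elementwise, x²·(x²·y) = -2·x²·(x·(x·y)) + 2·x·(x²·(x·y)) + 4·x·(x·(x·(x·y))) for all y ∈ 𝔄. -/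
/-!
Each identity is linearized by comparing `p (a + t • b)` with `p (a - t • b)`: their difference
is twice the odd part of a polynomial in `t`, and evaluating at `t = 1, 2` isolates the linear
coefficient once `6` is invertible. With `T = L_{x³}` and `V = L_{x²x²}`, linearizing `x⁴ = 0`
gives `T = -LU - 2L²`, linearizing `x(x²x²) = 0` gives `V = -4LUL`, and linearizing the first
of these once more, in the direction `x²`, gives `V + U² + 2LT + 2UL² + 2LUL + 2L²U = 0`.
Eliminating `T` and `V` gives the claim.
-/

theorem eq_zero_of_forall_smul_add_pow_three_smul_eq_zero {F M : Type*} [Field F]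
    [AddCommGroup M] [Module F M] (h2 : (2 : F) ≠ 0) (h3 : (3 : F) ≠ 0) {u v : M}
    (h : ∀ t : F, t • u + t ^ 3 • v = 0) : u = 0 := by
  have h6 : (6 : F) • u = 0 := by
    linear_combination (norm := module) (8 : F) • h 1 - h 2
  have h6_ne : (6 : F) ≠ 0 := by
    rw [show (6 : F) = 2 * 3 by norm_num]
    exact mul_ne_zero h2 h3
  exact (smul_eq_zero.mp h6).resolve_left h6_ne

section

variable {F A : Type*} [Field F] [NonUnitalNonAssocRing A] [Module F A]
  [SMulCommClass F A A] [IsScalarTower F A A]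

theorem linearize_pow_four (h2 : (2 : F) ≠ 0) (h3 : (3 : F) ≠ 0)
    (hx4 : ∀ x : A, x * (x * (x * x)) = 0) (a b : A) :
    b * (a * (a * a)) + a * (b * (a * a)) + a * (a * (b * a)) + a * (a * (a * b)) = 0 := by
  refine eq_zero_of_forall_smul_add_pow_three_smul_eq_zero h2 h3
    (v := b * (b * (b * a)) + b * (b * (a * b)) + b * (a * (b * b)) + a * (b * (b * b)))
    fun t => ?_
  have hodd : (a + t • b) * ((a + t • b) * ((a + t • b) * (a + t • b)))
      - (a - t • b) * ((a - t • b) * ((a - t • b) * (a - t • b)))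
      = (2 : F) • (t • (b * (a * (a * a)) + a * (b * (a * a)) + a * (a * (b * a))
            + a * (a * (a * b)))
        + t ^ 3 • (b * (b * (b * a)) + b * (b * (a * b)) + b * (a * (b * b))
            + a * (b * (b * b)))) := by
    simp only [mul_add, add_mul, mul_sub, sub_mul, smul_mul_assoc, mul_smul_comm]
    module
  rwa [hx4, hx4, sub_zero, eq_comm, smul_eq_zero, or_iff_right h2] at hodd

theorem linearize_mul_sq_mul_sq (h2 : (2 : F) ≠ 0) (h3 : (3 : F) ≠ 0)
    (hx5 : ∀ x : A, x * ((x * x) * (x * x)) = 0) (a b : A) :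
    b * ((a * a) * (a * a)) + a * ((b * a) * (a * a)) + a * ((a * b) * (a * a))
      + a * ((a * a) * (b * a)) + a * ((a * a) * (a * b)) = 0 := by
  refine eq_zero_of_forall_smul_add_pow_three_smul_eq_zero h2 h3
    (v := b * ((b * b) * (a * a)) + b * ((b * a) * (b * a)) + b * ((b * a) * (a * b))
      + b * ((a * b) * (b * a)) + b * ((a * b) * (a * b)) + b * ((a * a) * (b * b))
      + a * ((b * b) * (b * a)) + a * ((b * b) * (a * b)) + a * ((b * a) * (b * b))
      + a * ((a * b) * (b * b))) fun t => ?_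
  have hodd : (a + t • b) * (((a + t • b) * (a + t • b)) * ((a + t • b) * (a + t • b)))
      - (a - t • b) * (((a - t • b) * (a - t • b)) * ((a - t • b) * (a - t • b)))
      = (2 : F) • (t • (b * ((a * a) * (a * a)) + a * ((b * a) * (a * a))
            + a * ((a * b) * (a * a)) + a * ((a * a) * (b * a)) + a * ((a * a) * (a * b)))
        + t ^ 3 • (b * ((b * b) * (a * a)) + b * ((b * a) * (b * a)) + b * ((b * a) * (a * b))
            + b * ((a * b) * (b * a)) + b * ((a * b) * (a * b)) + b * ((a * a) * (b * b))
            + a * ((b * b) * (b * a)) + a * ((b * b) * (a * b)) + a * ((b * a) * (b * b))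
            + a * ((a * b) * (b * b)))
        + t ^ 5 • (b * ((b * b) * (b * b)))) := by
    simp only [mul_add, add_mul, mul_sub, sub_mul, smul_mul_assoc, mul_smul_comm]
    module
  rwa [hx5, hx5, hx5, smul_zero, add_zero, sub_zero, eq_comm, smul_eq_zero, or_iff_right h2]
    at hodd

theorem cube_mul_add_eq_zero (hcomm : ∀ a b : A, a * b = b * a)
    (h2 : (2 : F) ≠ 0) (h3 : (3 : F) ≠ 0) (hx4 : ∀ x : A, x * (x * (x * x)) = 0) (x y : A) :
    x * (x * x) * y + x * (x * x * y) + (2 : ℤ) • (x * (x * (x * y))) = 0 := by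
  have h := linearize_pow_four h2 h3 hx4 x y
  rw [hcomm y, hcomm y, hcomm y] at h
  linear_combination (norm := module) h

theorem sq_mul_sq_mul_add_eq_zero (hcomm : ∀ a b : A, a * b = b * a)
    (h2 : (2 : F) ≠ 0) (h3 : (3 : F) ≠ 0) (hx5 : ∀ x : A, x * ((x * x) * (x * x)) = 0)
    (x y : A) :
    x * x * (x * x) * y + (4 : ℤ) • (x * (x * x * (x * y))) = 0 := by
  have h := linearize_mul_sq_mul_sq h2 h3 hx5 x y
  rw [hcomm y, hcomm y x, hcomm (x * y)] at h
  linear_combination (norm := module) h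

theorem linearize_cube_mul_add_eq_zero (hcomm : ∀ a b : A, a * b = b * a)
    (h2 : (2 : F) ≠ 0) (h3 : (3 : F) ≠ 0) (hx4 : ∀ x : A, x * (x * (x * x)) = 0) (x y : A) :
    x * x * (x * x) * y + x * x * (x * x * y) + (2 : ℤ) • (x * (x * (x * x) * y))
      + (2 : ℤ) • (x * x * (x * (x * y))) + (2 : ℤ) • (x * (x * x * (x * y)))
      + (2 : ℤ) • (x * (x * (x * x * y))) = 0 := by
  set q : A → A := fun a => a * (a * a) * y + a * (a * a * y) + (2 : ℤ) • (a * (a * (a * y)))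
  have hq : ∀ a, q a = 0 := fun a => cube_mul_add_eq_zero hcomm h2 h3 hx4 a y
  have h : (x * x * (x * x) + x * (x * x * x) + x * (x * (x * x))) * y
      + x * x * (x * x * y) + x * (x * x * x * y) + x * (x * (x * x) * y)
      + (2 : ℤ) • (x * x * (x * (x * y)) + x * (x * x * (x * y)) + x * (x * (x * x * y)))
      = 0 := by
    refine eq_zero_of_forall_smul_add_pow_three_smul_eq_zero h2 h3 (v := q (x * x))
      fun t => ?_
    have hodd : q (x + t • (x * x)) - q (x - t • (x * x))
        = (2 : F) • (t • ((x * x * (x * x) + x * (x * x * x) + x * (x * (x * x))) * y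
          + x * x * (x * x * y) + x * (x * x * x * y) + x * (x * (x * x) * y)
          + (2 : ℤ) • (x * x * (x * (x * y)) + x * (x * x * (x * y)) + x * (x * (x * x * y))))
          + t ^ 3 • q (x * x)) := by
      simp only [q, mul_add, add_mul, mul_sub, sub_mul, smul_mul_assoc, mul_smul_comm,
        smul_add, smul_sub]
      module
    rwa [hq, hq, sub_zero, eq_comm, smul_eq_zero, or_iff_right h2] at hodd
  rw [hcomm (x * x) x, hx4, add_zero, add_zero] at h
  linear_combination (norm := module) h

end

/-- 𝔄 is a commutative (not necessarily associative) algebra over a field `F` of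
characteristic ≠ 2, 3, satisfying the identities `x⁴ = 0` and `x(x²x²) = 0`. -/
theorem stmt_15 {F A : Type*} [Field F] [NonUnitalNonAssocRing A]
    [Module F A] [SMulCommClass F A A] [IsScalarTower F A A]
    (hcomm : ∀ a b : A, a * b = b * a)
    (h2 : (2 : F) ≠ 0) (h3 : (3 : F) ≠ 0)
    (hx4 : ∀ x : A, x * (x * (x * x)) = 0)
    (hx5 : ∀ x : A, x * ((x * x) * (x * x)) = 0)
    (x y : A) :
    x * x * (x * x * (y)) =
      ((-2 : ℤ) • (x * x * (x * (x * (y))))) + (2 : ℤ) • (x * (x * x * (x * (y)))) + (4 : ℤ) • (x * (x * (x * (x * (y))))) := by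
  have hF := linearize_cube_mul_add_eq_zero hcomm h2 h3 hx4 x y
  have hV := sq_mul_sq_mul_add_eq_zero hcomm h2 h3 hx5 x y
  have hT := congrArg (x * ·) (cube_mul_add_eq_zero hcomm h2 h3 hx4 x y)
  simp only [mul_add, mul_smul_comm, mul_zero] at hT
  linear_combination (norm := module) hF - hV - (2 : ℤ) • hT
end

section
/- For every x ∈ 𝔄 the multiplication operator identity (LU)² = 4L⁶ holds; elementwise, x·(x²·(x·(x²·y))) = 4·x·(x·(x·(x·(x·(x·y))))) for all y ∈ 𝔄. -/
/-!
Since `2` and `3` are not zero divisors, the identities `x⁴ = 0` and `x(x²x²) = 0` imply their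
partial linearizations of degree one and two in a second variable `z` (evaluate them at `x + t z`
for `t = ±1, ±2`). Write `L`, `U`, `T` for multiplication by `x`, `x²`, `x³`. By commutativity the
degree-one parts give `T = -LU - 2L³` and `L_{x²x²} = -4LUL`, and `x²x³ = 0`. Polarizing the
degree-two parts and putting `x²` or `x³` in the new variable gives four more operator identities;
eliminating `T` from them yields in turn `U² = 2LUL - 2UL² + 4L⁴`, `UL³ = 2L⁵`, `U²L = 2LUL²`,
`L³U = -L²UL - 4L⁵` and finally `(LU)² = 4L⁶`.
-/

theorem eq_zero_of_forall_sum_zsmul_pow_eq_zero {M : Type*} [AddCommGroup M]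
    (h2 : IsSMulRegular M (2 : ℤ)) (h3 : IsSMulRegular M (3 : ℤ)) {a b c d : M}
    (h : ∀ t : ℤ, t • a + t ^ 2 • b + t ^ 3 • c + t ^ 4 • d = 0) :
    a = 0 ∧ b = 0 ∧ c = 0 ∧ d = 0 := by
  have h24 : IsSMulRegular M (24 : ℤ) := by simpa using (h2.mul h2).mul (h2.mul h3)
  have e₁ := h 1
  have e₂ := h (-1)
  have e₃ := h 2
  have e₄ := h (-2)
  norm_num at e₁ e₂ e₃ e₄
  have hd : d = 0 := h24.right_eq_zero_of_smul <| by
    linear_combination (norm := module) e₃ + e₄ - 4 • e₁ - 4 • e₂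
  have hc : c = 0 := h24.right_eq_zero_of_smul <| by
    linear_combination (norm := module) 2 • e₃ - 2 • e₄ - 4 • e₁ + 4 • e₂
  refine ⟨h24.right_eq_zero_of_smul ?_, h24.right_eq_zero_of_smul ?_, hc, hd⟩
  · linear_combination (norm := module) 12 • e₁ - 12 • e₂ - 24 • hc
  · linear_combination (norm := module) 12 • e₁ + 12 • e₂ - 24 • hd

theorem isSMulRegular_int_of_cast_ne_zero {F M : Type*} [Field F] [AddCommGroup M] [Module F M]
    {n : ℤ} (hn : (n : F) ≠ 0) : IsSMulRegular M n := fun v w h =>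
  smul_right_injective M hn (by simpa only [Int.cast_smul_eq_zsmul] using h)

class IsPowFourNil (A : Type*) [Mul A] [Zero A] : Prop where
  pow_four_eq_zero : ∀ x : A, x * (x * (x * x)) = 0
  mul_sq_mul_sq_eq_zero : ∀ x : A, x * (x * x * (x * x)) = 0

namespace IsPowFourNil

section Linearization

variable {A : Type*} [NonUnitalNonAssocRing A]

def powFourLin₁ (x z : A) : A :=
  z * (x * (x * x)) + x * (z * (x * x)) + x * (x * (z * x)) + x * (x * (x * z))

def powFourLin₂ (x z : A) : A :=
  z * (z * (x * x)) + z * (x * (z * x)) + z * (x * (x * z)) + x * (z * (z * x)) +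
    x * (z * (x * z)) + x * (x * (z * z))

def mulSqSqLin₁ (x z : A) : A :=
  z * (x * x * (x * x)) + x * (z * x * (x * x)) + x * (x * z * (x * x)) + x * (x * x * (z * x)) +
    x * (x * x * (x * z))

def mulSqSqLin₂ (x z : A) : A :=
  z * (z * x * (x * x)) + z * (x * z * (x * x)) + z * (x * x * (z * x)) + z * (x * x * (x * z)) +
    x * (z * z * (x * x)) + x * (x * x * (z * z)) + x * (z * x * (z * x)) + x * (z * x * (x * z)) +
    x * (x * z * (z * x)) + x * (x * z * (x * z))

theorem add_zsmul_pow_four (x z : A) (t : ℤ) :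
    (x + t • z) * ((x + t • z) * ((x + t • z) * (x + t • z))) =
      x * (x * (x * x)) + t • powFourLin₁ x z + t ^ 2 • powFourLin₂ x z +
        t ^ 3 • powFourLin₁ z x + t ^ 4 • (z * (z * (z * z))) := by
  simp only [powFourLin₁, powFourLin₂, mul_add, add_mul, smul_mul_assoc, mul_smul_comm]
  module

theorem add_zsmul_mul_sq_mul_sq (x z : A) (t : ℤ) :
    (x + t • z) * ((x + t • z) * (x + t • z) * ((x + t • z) * (x + t • z))) =
      x * (x * x * (x * x)) + t • mulSqSqLin₁ x z + t ^ 2 • mulSqSqLin₂ x z +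
        t ^ 3 • mulSqSqLin₂ z x + t ^ 4 • mulSqSqLin₁ z x + t ^ 5 • (z * (z * z * (z * z))) := by
  simp only [mulSqSqLin₁, mulSqSqLin₂, mul_add, add_mul, smul_mul_assoc, mul_smul_comm]
  module

variable [IsPowFourNil A]

theorem powFourLin_eq_zero (h2 : IsSMulRegular A (2 : ℤ)) (h3 : IsSMulRegular A (3 : ℤ))
    (x z : A) : powFourLin₁ x z = 0 ∧ powFourLin₂ x z = 0 := by
  obtain ⟨h₁, h₂, -⟩ := eq_zero_of_forall_sum_zsmul_pow_eq_zero h2 h3 fun t => by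
    have := add_zsmul_pow_four x z t
    rwa [pow_four_eq_zero, pow_four_eq_zero, zero_add, eq_comm] at this
  exact ⟨h₁, h₂⟩

theorem mulSqSqLin_eq_zero (h2 : IsSMulRegular A (2 : ℤ)) (h3 : IsSMulRegular A (3 : ℤ))
    (x z : A) : mulSqSqLin₁ x z = 0 ∧ mulSqSqLin₂ x z = 0 := by
  obtain ⟨h₁, h₂, -⟩ := eq_zero_of_forall_sum_zsmul_pow_eq_zero h2 h3 fun t => by
    have := add_zsmul_mul_sq_mul_sq x z t
    rwa [mul_sq_mul_sq_eq_zero, mul_sq_mul_sq_eq_zero, mul_sq_mul_sq_eq_zero, smul_zero,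
      add_zero, zero_add, eq_comm] at this
  exact ⟨h₁, h₂⟩

theorem powFourLin₂_polar (h2 : IsSMulRegular A (2 : ℤ)) (h3 : IsSMulRegular A (3 : ℤ))
    (x z w : A) :
    z * (w * (x * x)) + w * (z * (x * x)) + z * (x * (w * x)) + w * (x * (z * x)) +
      z * (x * (x * w)) + w * (x * (x * z)) + x * (z * (w * x)) + x * (w * (z * x)) +
      x * (z * (x * w)) + x * (w * (x * z)) + x * (x * (z * w)) + x * (x * (w * z)) = 0 := by
  have hzw := (powFourLin_eq_zero h2 h3 x (z + w)).2
  have hz := (powFourLin_eq_zero h2 h3 x z).2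
  have hw := (powFourLin_eq_zero h2 h3 x w).2
  simp only [powFourLin₂, mul_add, add_mul] at hzw hz hw
  linear_combination (norm := abel) hzw - hz - hw

theorem mulSqSqLin₂_polar (h2 : IsSMulRegular A (2 : ℤ)) (h3 : IsSMulRegular A (3 : ℤ))
    (x z w : A) :
    z * (w * x * (x * x)) + w * (z * x * (x * x)) + z * (x * w * (x * x)) + w * (x * z * (x * x)) +
      z * (x * x * (w * x)) + w * (x * x * (z * x)) + z * (x * x * (x * w)) +
      w * (x * x * (x * z)) + x * (z * w * (x * x)) + x * (w * z * (x * x)) +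
      x * (x * x * (z * w)) + x * (x * x * (w * z)) + x * (z * x * (w * x)) +
      x * (w * x * (z * x)) + x * (z * x * (x * w)) + x * (w * x * (x * z)) +
      x * (x * z * (w * x)) + x * (x * w * (z * x)) + x * (x * z * (x * w)) +
      x * (x * w * (x * z)) = 0 := by
  have hzw := (mulSqSqLin_eq_zero h2 h3 x (z + w)).2
  have hz := (mulSqSqLin_eq_zero h2 h3 x z).2
  have hw := (mulSqSqLin_eq_zero h2 h3 x w).2
  simp only [mulSqSqLin₂, mul_add, add_mul] at hzw hz hw
  linear_combination (norm := abel) hzw - hz - hw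

end Linearization

section Commutative

variable {A : Type*} [NonUnitalNonAssocCommRing A] [IsPowFourNil A]

theorem cube_mul (h2 : IsSMulRegular A (2 : ℤ)) (h3 : IsSMulRegular A (3 : ℤ)) (x z : A) :
    x * (x * x) * z = -(x * (x * x * z)) - 2 • (x * (x * (x * z))) := by
  have h := (powFourLin_eq_zero h2 h3 x z).1
  rw [powFourLin₁, mul_comm z, mul_comm z, mul_comm z] at h
  linear_combination (norm := abel) h

theorem sq_sq_mul (h2 : IsSMulRegular A (2 : ℤ)) (h3 : IsSMulRegular A (3 : ℤ)) (x z : A) :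
    x * x * (x * x) * z = -(4 • (x * (x * x * (x * z)))) := by
  have h := (mulSqSqLin_eq_zero h2 h3 x z).1
  simp only [mulSqSqLin₁, mul_comm z, mul_comm (x * z) (x * x)] at h
  linear_combination (norm := abel) h

theorem sq_mul_cube (h2 : IsSMulRegular A (2 : ℤ)) (h3 : IsSMulRegular A (3 : ℤ)) (x : A) :
    x * x * (x * (x * x)) = 0 := by
  rw [mul_comm, cube_mul h2 h3, mul_sq_mul_sq_eq_zero, pow_four_eq_zero]
  simp

theorem sq_mul_sq_mul (h2 : IsSMulRegular A (2 : ℤ)) (h3 : IsSMulRegular A (3 : ℤ)) (x z : A) :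
    x * x * (x * x * z) = 2 • (x * (x * x * (x * z))) - 2 • (x * x * (x * (x * z))) +
      4 • (x * (x * (x * (x * z)))) := by
  have h := powFourLin₂_polar h2 h3 x z (x * x)
  simp only [mul_comm (x * x) x, pow_four_eq_zero, mul_comm z, zero_mul, add_zero] at h
  simp only [cube_mul h2 h3, sq_sq_mul h2 h3, mul_sub, mul_neg, mul_smul_comm] at h
  linear_combination (norm := abel) h

theorem sq_mul_mul_mul_mul (h2 : IsSMulRegular A (2 : ℤ)) (h3 : IsSMulRegular A (3 : ℤ)) (x z : A) :
    x * x * (x * (x * (x * z))) = 2 • (x * (x * (x * (x * (x * z))))) := by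
  have h := mulSqSqLin₂_polar h2 h3 x z (x * x)
  simp only [mul_comm (x * x) x, mul_comm (x * (x * x)) (x * x), sq_mul_cube h2 h3, mul_comm z,
    mul_comm (x * z) (x * x), mul_comm (x * x * z) (x * x), mul_comm (x * z) (x * (x * x)),
    zero_mul, add_zero, zero_add] at h
  simp only [cube_mul h2 h3, sq_mul_sq_mul h2 h3, mul_sub, mul_neg, mul_smul_comm, mul_add] at h
  rw [← sub_eq_zero]
  refine ((h2.mul h2).mul h2).right_eq_zero_of_smul ?_
  linear_combination (norm := abel) -h

theorem sq_mul_sq_mul_mul (h2 : IsSMulRegular A (2 : ℤ)) (h3 : IsSMulRegular A (3 : ℤ)) (x z : A) :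
    x * x * (x * x * (x * z)) = 2 • (x * (x * x * (x * (x * z)))) := by
  rw [sq_mul_sq_mul h2 h3, sq_mul_mul_mul_mul h2 h3]
  abel

theorem mul_mul_mul_sq_mul (h2 : IsSMulRegular A (2 : ℤ)) (h3 : IsSMulRegular A (3 : ℤ)) (x z : A) :
    x * (x * (x * (x * x * z))) =
      -(x * (x * (x * x * (x * z)))) - 4 • (x * (x * (x * (x * (x * z))))) := by
  have h := powFourLin₂_polar h2 h3 x z (x * (x * x))
  simp only [mul_comm (x * (x * x)) (x * x), sq_mul_cube h2 h3, mul_comm (x * (x * x)) x,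
    pow_four_eq_zero, mul_comm z, mul_zero, zero_mul, add_zero, zero_add] at h
  simp only [cube_mul h2 h3, sq_mul_sq_mul h2 h3, mul_sub, mul_neg, mul_smul_comm, mul_add] at h
  rw [← sub_eq_zero]
  refine (h2.mul h2).right_eq_zero_of_smul ?_
  linear_combination (norm := abel) -h

theorem mul_sq_mul_mul_sq_mul (h2 : IsSMulRegular A (2 : ℤ)) (h3 : IsSMulRegular A (3 : ℤ))
    (x z : A) :
    x * (x * x * (x * (x * x * z))) = (4 : ℤ) • (x * (x * (x * (x * (x * (x * z)))))) := by
  have h := mulSqSqLin₂_polar h2 h3 x z (x * (x * x))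
  simp only [mul_comm (x * (x * x)) x, pow_four_eq_zero, mul_comm z, mul_comm (x * z) (x * x),
    mul_comm (x * (x * x) * z) (x * x), mul_zero, zero_mul, add_zero, zero_add] at h
  simp only [cube_mul h2 h3, sq_mul_sq_mul_mul h2 h3, sq_mul_mul_mul_mul h2 h3,
    mul_mul_mul_sq_mul h2 h3, mul_sub, mul_neg, mul_smul_comm] at h
  rw [← sub_eq_zero]
  refine (h2.mul h2).right_eq_zero_of_smul ?_
  linear_combination (norm := abel) -h

end Commutative
end IsPowFourNil

theorem stmt_16_general {F A : Type*} [Field F] [NonUnitalNonAssocRing A]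
    [Module F A]
    (hcomm : ∀ a b : A, a * b = b * a)
    (h2 : (2 : F) ≠ 0) (h3 : (3 : F) ≠ 0)
    (hx4 : ∀ x : A, x * (x * (x * x)) = 0)
    (hx5 : ∀ x : A, x * ((x * x) * (x * x)) = 0)
    (x y : A) :
    x * (x * x * (x * (x * x * (y)))) = (4 : ℤ) • (x * (x * (x * (x * (x * (x * (y))))))) := by
  let _ : NonUnitalNonAssocCommRing A := { ‹NonUnitalNonAssocRing A› with mul_comm := hcomm }
  have : IsPowFourNil A := ⟨hx4, hx5⟩
  exact IsPowFourNil.mul_sq_mul_mul_sq_mul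
    (isSMulRegular_int_of_cast_ne_zero (F := F) (by exact_mod_cast h2))
    (isSMulRegular_int_of_cast_ne_zero (F := F) (by exact_mod_cast h3)) x y

/-- 𝔄 is a commutative (not necessarily associative) algebra over a field `F` of
characteristic ≠ 2, 3, satisfying the identities `x⁴ = 0` and `x(x²x²) = 0`. -/
theorem stmt_16 {F A : Type*} [Field F] [NonUnitalNonAssocRing A]
    [Module F A] [SMulCommClass F A A] [IsScalarTower F A A]
    (hcomm : ∀ a b : A, a * b = b * a)
    (h2 : (2 : F) ≠ 0) (h3 : (3 : F) ≠ 0)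
    (hx4 : ∀ x : A, x * (x * (x * x)) = 0)
    (hx5 : ∀ x : A, x * ((x * x) * (x * x)) = 0)
    (x y : A) :
    x * (x * x * (x * (x * x * (y)))) = (4 : ℤ) • (x * (x * (x * (x * (x * (x * (y))))))) :=
  stmt_16_general hcomm h2 h3 hx4 hx5 x y
end

section
/- For every x ∈ 𝔄 the multiplication operator identity LU² = -2LUL² - 2L³U - 4L⁵ holds; elementwise, x·(x²·(x²·y)) = -2·x·(x²·(x·(x·y))) - 2·x·(x·(x·(x²·y))) - 4·x·(x·(x·(x·(x·y)))) for all y ∈ 𝔄. -/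
set_option linter.unusedSectionVars false

section Aux
variable {F A : Type*} [Field F] [NonUnitalNonAssocRing A]
    [Module F A] [SMulCommClass F A A] [IsScalarTower F A A]

private lemma cancel_smul (n : ℤ) (hn : ((n:ℤ):F) ≠ 0) (a : A) (h : n • a = 0) : a = 0 := by
  rw [← Int.cast_smul_eq_zsmul F] at h
  have h2 := congrArg (fun t => (((n:ℤ):F))⁻¹ • t) h
  simpa [smul_smul, inv_mul_cancel₀ hn] using h2
private lemma exp4 (hcomm : ∀ a b : A, a * b = b * a) (a b : A) :
    (a+b)*((a+b)*((a+b)*(a+b))) = ((a*(a*a))*b) + (a*((a*a)*b)) + (a*(a*(a*a))) + (2:ℤ) • (a*(a*(a*b))) + (a*(a*(b*b))) + (2:ℤ) • (a*(b*(a*b))) + (a*(b*(b*b))) + (b*((a*a)*b)) + (2:ℤ) • (b*(a*(a*b))) + (b*(a*(b*b))) + (2:ℤ) • (b*(b*(a*b))) + (b*(b*(b*b))) := by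
  simp only [mul_add, add_mul, hcomm (b) (a*(a*a)), hcomm (b) (a*a), hcomm (b) (a)]
  abel
private lemma exp6 (hcomm : ∀ a b : A, a * b = b * a) (a b : A) :
    (a+b)*((a+b)*(((a+b)*(a+b))*((a+b)*(a+b)))) = ((a*((a*a)*(a*a)))*b) + (a*(((a*a)*(a*a))*b)) + (a*(a*((a*a)*(a*a)))) + (4:ℤ) • (a*(a*((a*a)*(a*b)))) + (2:ℤ) • (a*(a*((a*a)*(b*b)))) + (4:ℤ) • (a*(a*((a*b)*(a*b)))) + (4:ℤ) • (a*(a*((a*b)*(b*b)))) + (a*(a*((b*b)*(b*b)))) + (4:ℤ) • (a*(b*((a*a)*(a*b)))) + (2:ℤ) • (a*(b*((a*a)*(b*b)))) + (4:ℤ) • (a*(b*((a*b)*(a*b)))) + (4:ℤ) • (a*(b*((a*b)*(b*b)))) + (a*(b*((b*b)*(b*b)))) + (b*(((a*a)*(a*a))*b)) + (4:ℤ) • (b*(a*((a*a)*(a*b)))) + (2:ℤ) • (b*(a*((a*a)*(b*b)))) + (4:ℤ) • (b*(a*((a*b)*(a*b)))) + (4:ℤ) • (b*(a*((a*b)*(b*b))))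 + (b*(a*((b*b)*(b*b)))) + (4:ℤ) • (b*(b*((a*a)*(a*b)))) + (2:ℤ) • (b*(b*((a*a)*(b*b)))) + (4:ℤ) • (b*(b*((a*b)*(a*b)))) + (4:ℤ) • (b*(b*((a*b)*(b*b)))) + (b*(b*((b*b)*(b*b)))) := by
  simp only [mul_add, add_mul, hcomm (a*b) (a*a), hcomm (b*b) (a*a), hcomm (b*b) (a*b), hcomm (b) ((a*a)*(a*a)), hcomm (b) (a*((a*a)*(a*a))), hcomm (b) (a)]
  abel
private lemma lin4 (hcomm : ∀ a b : A, a * b = b * a)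
    (hx4 : ∀ x : A, x * (x * (x * x)) = 0) (a b : A) :
    ((a*(a*a))*b) + (a*((a*a)*b)) + (2:ℤ) • (a*(a*(a*b))) + (a*(a*(b*b))) + (2:ℤ) • (a*(b*(a*b))) + (a*(b*(b*b))) + (b*((a*a)*b)) + (2:ℤ) • (b*(a*(a*b))) + (b*(a*(b*b))) + (2:ℤ) • (b*(b*(a*b))) = 0 := by
  have h := hx4 (a + b)
  rw [exp4 hcomm] at h
  linear_combination (norm := module) h - hx4 a - hx4 b
private lemma C1C2zero (hcomm : ∀ a b : A, a * b = b * a)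
    (h2 : (2 : F) ≠ 0) (h3 : (3 : F) ≠ 0)
    (hx4 : ∀ x : A, x * (x * (x * x)) = 0) (a b : A) :
    (((a*(a*a))*b) + (a*((a*a)*b)) + (2:ℤ) • (a*(a*(a*b))) = 0) ∧ ((a*(a*(b*b))) + (2:ℤ) • (a*(b*(a*b))) + (b*((a*a)*b)) + (2:ℤ) • (b*(a*(a*b))) = 0) := by
  have e1 := lin4 hcomm hx4 a b
  have e2 := lin4 hcomm hx4 a (-b)
  have e3 := lin4 hcomm hx4 a ((2:ℤ) • b)
  simp only [mul_neg, neg_mul, neg_neg, smul_neg] at e2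
  simp only [smul_mul_assoc, mul_smul_comm, smul_smul] at e3
  constructor
  · refine cancel_smul (F := F) 12 ?_ _ ?_
    · have : ((12:ℤ):F) = 2*2*3 := by norm_num
      rw [this]; exact mul_ne_zero (mul_ne_zero h2 h2) h3
    · linear_combination (norm := module) (12:ℤ) • e1 - (4:ℤ) • e2 - (2:ℤ) • e3
  · refine cancel_smul (F := F) 2 ?_ _ ?_
    · have : ((2:ℤ):F) = 2 := by norm_num
      rw [this]; exact h2
    · linear_combination (norm := module) e1 + e2
private lemma C1zero (hcomm : ∀ a b : A, a * b = b * a) (h2 : (2 : F) ≠ 0) (h3 : (3 : F) ≠ 0) (hx4 : ∀ x : A, x * (x * (x * x)) = 0) (a b : A) : ((a*(a*a))*b) + (a*((a*a)*b)) + (2:ℤ) • (a*(a*(a*b))) = 0 := (C1C2zero hcomm h2 h3 hx4 a b).1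
private lemma C2zero (hcomm : ∀ a b : A, a * b = b * a) (h2 : (2 : F) ≠ 0) (h3 : (3 : F) ≠ 0) (hx4 : ∀ x : A, x * (x * (x * x)) = 0) (a b : A) : (a*(a*(b*b))) + (2:ℤ) • (a*(b*(a*b))) + (b*((a*a)*b)) + (2:ℤ) • (b*(a*(a*b))) = 0 := (C1C2zero hcomm h2 h3 hx4 a b).2
private lemma Kzero (hcomm : ∀ a b : A, a * b = b * a) (h2 : (2 : F) ≠ 0) (h3 : (3 : F) ≠ 0)
    (hx4 : ∀ x : A, x * (x * (x * x)) = 0) (a c d : A) :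
    (2:ℤ) • (a*(a*(c*d))) + (2:ℤ) • (a*(c*(a*d))) + (2:ℤ) • (a*(d*(a*c))) + (c*((a*a)*d)) + (2:ℤ) • (c*(a*(a*d))) + (d*((a*a)*c)) + (2:ℤ) • (d*(a*(a*c))) = 0 := by
  have h := C2zero hcomm h2 h3 hx4 a (c + d)
  simp only [mul_add, add_mul, hcomm (d) (c)] at h
  linear_combination (norm := module) h - C2zero hcomm h2 h3 hx4 a c - C2zero hcomm h2 h3 hx4 a d
private lemma lin6 (hcomm : ∀ a b : A, a * b = b * a)
    (hx6 : ∀ x : A, x * (x * ((x * x) * (x * x))) = 0) (a b : A) :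
    ((a*((a*a)*(a*a)))*b) + (a*(((a*a)*(a*a))*b)) + (4:ℤ) • (a*(a*((a*a)*(a*b)))) + (2:ℤ) • (a*(a*((a*a)*(b*b)))) + (4:ℤ) • (a*(a*((a*b)*(a*b)))) + (4:ℤ) • (a*(a*((a*b)*(b*b)))) + (a*(a*((b*b)*(b*b)))) + (4:ℤ) • (a*(b*((a*a)*(a*b)))) + (2:ℤ) • (a*(b*((a*a)*(b*b)))) + (4:ℤ) • (a*(b*((a*b)*(a*b)))) + (4:ℤ) • (a*(b*((a*b)*(b*b)))) + (a*(b*((b*b)*(b*b)))) + (b*(((a*a)*(a*a))*b)) + (4:ℤ) • (b*(a*((a*a)*(a*b)))) + (2:ℤ) • (b*(a*((a*a)*(b*b)))) + (4:ℤ) • (b*(a*((a*b)*(a*b)))) + (4:ℤ) • (b*(a*((a*b)*(b*b)))) + (b*(a*((b*b)*(b*b)))) + (4:ℤ) • (b*(b*((a*a)*(a*b)))) + (2:ℤ) • (b*(b*((a*a)*(b*b)))) + (4:ℤ) • (b*(b*((a*b)*(a*b)))) + (4:ℤ) • (b*(b*((a*b)*(b*b)))) = 0 := by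
  have h := hx6 (a + b)
  rw [exp6 hcomm] at h
  linear_combination (norm := module) h - hx6 a - hx6 b
private lemma D1zero (hcomm : ∀ a b : A, a * b = b * a)
    (h2 : (2 : F) ≠ 0) (h3 : (3 : F) ≠ 0) (h5 : (5 : F) ≠ 0)
    (hx6 : ∀ x : A, x * (x * ((x * x) * (x * x))) = 0) (a b : A) :
    ((a*((a*a)*(a*a)))*b) + (a*(((a*a)*(a*a))*b)) + (4:ℤ) • (a*(a*((a*a)*(a*b)))) = 0 := by
  have e1 := lin6 hcomm hx6 a b
  have e2 := lin6 hcomm hx6 a (-b)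
  have e3 := lin6 hcomm hx6 a ((2:ℤ) • b)
  have e4 := lin6 hcomm hx6 a ((-2:ℤ) • b)
  have e5 := lin6 hcomm hx6 a ((3:ℤ) • b)
  have e6 := lin6 hcomm hx6 a ((-3:ℤ) • b)
  simp only [mul_neg, neg_mul, neg_neg, smul_neg] at e2
  simp only [smul_mul_assoc, mul_smul_comm, smul_smul] at e3 e4 e5 e6
  refine cancel_smul (F := F) 60 ?_ _ ?_
  · have : ((60:ℤ):F) = 2*2*3*5 := by norm_num
    rw [this]; exact mul_ne_zero (mul_ne_zero (mul_ne_zero h2 h2) h3) h5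
  · linear_combination (norm := module) (45:ℤ) • e1 - (45:ℤ) • e2 - (9:ℤ) • e3 + (9:ℤ) • e4 + e5 - e6
end Aux

/-- 𝔄 is a commutative (not necessarily associative) algebra over a field `F` of
characteristic ≠ 2, 3, 5, satisfying the identities `x⁴ = 0` and `x(x(x²x²)) = 0`. -/
theorem stmt_18 {F A : Type*} [Field F] [NonUnitalNonAssocRing A]
    [Module F A] [SMulCommClass F A A] [IsScalarTower F A A]
    (hcomm : ∀ a b : A, a * b = b * a)
    (h2 : (2 : F) ≠ 0) (h3 : (3 : F) ≠ 0) (h5 : (5 : F) ≠ 0)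
    (hx4 : ∀ x : A, x * (x * (x * x)) = 0)
    (hx6 : ∀ x : A, x * (x * ((x * x) * (x * x))) = 0)
    (x y : A) :
    x * (x * x * (x * x * (y))) =
      ((-2 : ℤ) • (x * (x * x * (x * (x * (y)))))) + ((-2 : ℤ) • (x * (x * (x * (x * x * (y)))))) + ((-4 : ℤ) • (x * (x * (x * (x * (x * (y))))))) := by
  have J0 : (x*((x*(x*x))*(x*y))) + (x*(x*((x*x)*(x*y)))) + (2:ℤ) • (x*(x*(x*(x*(x*y))))) = 0 := by
    have h := congrArg (fun t => x * (t)) (C1zero hcomm h2 h3 hx4 x (x*y))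
    simp only [mul_add, mul_smul_comm, mul_zero] at h
    linear_combination (norm := module) h
  have J1 : ((x*(x*x))*((x*x)*y)) + (x*((x*x)*((x*x)*y))) + (2:ℤ) • (x*(x*(x*((x*x)*y)))) = 0 := C1zero hcomm h2 h3 hx4 x ((x*x)*y)
  have J2 : ((x*(x*x))*(x*(x*y))) + (x*((x*x)*(x*(x*y)))) + (2:ℤ) • (x*(x*(x*(x*(x*y))))) = 0 := C1zero hcomm h2 h3 hx4 x (x*(x*y))
  have J3 : (((x*x)*(x*(x*x)))*y) + ((x*((x*x)*(x*x)))*y) + (2:ℤ) • ((x*(x*(x*(x*x))))*y) = 0 := by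
    have h := congrArg (fun t => y * (t)) (C1zero hcomm h2 h3 hx4 x (x*x))
    simp only [mul_add, mul_smul_comm, mul_zero, hcomm (x*(x*x)) (x*x), hcomm (y) ((x*x)*(x*(x*x))), hcomm (y) (x*((x*x)*(x*x))), hcomm (y) (x*(x*(x*(x*x))))] at h
    linear_combination (norm := module) h
  have J4 : (x*(((x*x)*(x*x))*y)) + (2:ℤ) • (x*((x*(x*(x*x)))*y)) + (x*((x*x)*((x*x)*y))) + (2:ℤ) • (x*((x*x)*(x*(x*y)))) + (2:ℤ) • (x*(x*((x*(x*x))*y))) + (2:ℤ) • (x*(x*((x*x)*(x*y)))) + (2:ℤ) • (x*(x*(x*((x*x)*y)))) = 0 := by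
    have h := congrArg (fun t => x * (t)) (Kzero hcomm h2 h3 hx4 x (x*x) y)
    simp only [mul_add, mul_smul_comm, mul_zero, hcomm (y) ((x*x)*(x*x)), hcomm (y) (x*(x*(x*x))), hcomm (y) (x*(x*x))] at h
    linear_combination (norm := module) h
  have J5 : (((x*x)*(x*(x*x)))*y) + (2:ℤ) • ((x*(x*(x*(x*x))))*y) + ((x*(x*x))*((x*x)*y)) + (2:ℤ) • ((x*(x*x))*(x*(x*y))) + (2:ℤ) • (x*((x*(x*(x*x)))*y)) + (2:ℤ) • (x*((x*(x*x))*(x*y))) + (2:ℤ) • (x*(x*((x*(x*x))*y))) = 0 := by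
    have h := Kzero hcomm h2 h3 hx4 x (x*(x*x)) y
    simp only [hcomm (y) ((x*x)*(x*(x*x))), hcomm (y) (x*(x*(x*(x*x)))), hcomm (y) (x*(x*(x*x)))] at h
    linear_combination (norm := module) h
  have J6 : ((x*((x*x)*(x*x)))*y) + (x*(((x*x)*(x*x))*y)) + (4:ℤ) • (x*(x*((x*x)*(x*y)))) = 0 := D1zero hcomm h2 h3 h5 hx6 x y
  have hfin : (2:ℤ) • ((x * (x * x * (x * x * (y)))) + (2:ℤ) • (x * (x * x * (x * (x * (y))))) + (2:ℤ) • (x * (x * (x * (x * x * (y))))) + (4:ℤ) • (x * (x * (x * (x * (x * (y))))))) = 0 := by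
    linear_combination (norm := module) (2:ℤ) • J0 + (1:ℤ) • J1 + (2:ℤ) • J2 + (1:ℤ) • J3 + (1:ℤ) • J4 + (-1:ℤ) • J5 + (-1:ℤ) • J6
  have hz := cancel_smul (F := F) 2 (by
      have : ((2:ℤ):F) = 2 := by norm_num
      rw [this]; exact h2) _ hfin
  linear_combination (norm := module) hz
end
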